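/- The Schoen threefold defined by x₁³+x₂³+x₃³ = x₄³+x₅³+x₆³ and x₁x₂x₃ = x₄x₅x₆ in P^5 over ℂ has exactly 108 singular points. -/

import Mathlib

/-!
Where the Jacobian has rank at most one, its `2 × 2` minors give `x₂ (x₀³ - x₁³) = 0`,
`x₁ (x₀³ - x₂³) = 0` and the same relations for `x₃, x₄, x₅`.

If `x₀x₁x₂ ≠ 0`, then also `x₃x₄x₅ ≠ 0` (the two products are equal), so the cubes agree within
each triple, and the cubic equation makes all six cubes equal. The point is then
`[1 : ζ₁ : … : ζ₅]` with cube roots of unity satisfying `ζ₁ζ₂ = ζ₃ζ₄ζ₅`, which gives `3⁴ = 81`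
points. If `x₀x₁x₂ = 0`, then `x₃x₄x₅ = 0` as well, and the minors leave at most one nonzero
coordinate in each triple. The cubic then forces the point to be `e_i + ζ e_{3+j}`, which gives
`3 · 3 · 3 = 27` points. Conversely all `108` points are singular: on the first family the second
row of the Jacobian is `x₀x₁x₂ / 3` times the first, and on the second family that row vanishes.
-/

open Projectivization
open scoped LinearAlgebra.Projectivization

theorem rootsOfUnity.coe_pow_eq_one {M : Type*} [CommMonoid M] {n : ℕ}
    (ζ : rootsOfUnity n M) : ((ζ : Mˣ) : M) ^ n = 1 :=
  (mem_rootsOfUnity' n _).1 ζ.2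

theorem Matrix.rank_le_one_of_row_one_eq_smul {R n : Type*} [CommRing R] [Nontrivial R]
    [Fintype n] {M : Matrix (Fin 2) n R} {c : R} (h : M 1 = c • M 0) : M.rank ≤ 1 := by
  have hM : M = Matrix.vecMulVec ![1, c] (M 0) := by
    ext i j; fin_cases i <;> simp [Matrix.vecMulVec_apply, h]
  exact hM ▸ Matrix.rank_vecMulVec_le _ _

theorem Matrix.mul_eq_mul_of_rank_le_one {R n : Type*} [CommRing R] [IsDomain R] [Fintype n]
    {M : Matrix (Fin 2) n R} (h : M.rank ≤ 1) (i j : n) :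
    M 0 i * M 1 j = M 0 j * M 1 i := by
  by_contra hne
  have hdet : (M.submatrix id ![i, j]).det ≠ 0 := by
    rw [Matrix.det_fin_two]
    simpa [sub_eq_zero, mul_comm (M 1 i)] using hne
  have := (M.rank_submatrix_le id ![i, j]).trans h
  rw [Matrix.rank_of_det_ne_zero hdet] at this
  simp at this

namespace Projectivization

variable {K ι : Type*} [Field K] {v w : ι → K} {hv : v ≠ 0} {hw : w ≠ 0}

theorem apply_eq_zero_iff_of_mk_eq_mk (h : mk K v hv = mk K w hw) (k : ι) :
    v k = 0 ↔ w k = 0 := by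
  obtain ⟨a, rfl⟩ := (mk_eq_mk_iff' K v w hv hw).1 h
  have ha : a ≠ 0 := by rintro rfl; exact hv (zero_smul K w)
  simp [ha]

theorem eq_of_mk_eq_mk_of_apply_eq (h : mk K v hv = mk K w hw) {k : ι} (hk : v k = w k)
    (hk0 : w k ≠ 0) : v = w := by
  obtain ⟨a, rfl⟩ := (mk_eq_mk_iff' K v w hv hw).1 h
  obtain rfl : a = 1 := by simpa [hk0] using hk
  exact one_smul K w

end Projectivization

theorem Fin.castAdd_ne_natAdd {m n : ℕ} (i : Fin m) (j : Fin n) :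
    Fin.castAdd n i ≠ Fin.natAdd m j :=
  Fin.ne_of_val_ne (by simp only [Fin.val_castAdd, Fin.val_natAdd]; omega)

theorem exists_forall_ne_eq_zero_of_cube_relations {R : Type*} [CommRing R] [IsDomain R]
    {x : Fin 3 → R} (hp : x 0 * x 1 * x 2 = 0) (h01 : x 2 * (x 0 ^ 3 - x 1 ^ 3) = 0)
    (h02 : x 1 * (x 0 ^ 3 - x 2 ^ 3) = 0) : ∃ i, ∀ k ≠ i, x k = 0 := by
  have key : (x 1 = 0 ∧ x 2 = 0) ∨ (x 0 = 0 ∧ x 2 = 0) ∨ (x 0 = 0 ∧ x 1 = 0) := by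
    rcases mul_eq_zero.1 hp with h | h2
    · rcases mul_eq_zero.1 h with h0 | h1
      · simp only [h0, zero_pow three_ne_zero, zero_sub, mul_neg, neg_eq_zero, mul_eq_zero,
          pow_eq_zero_iff three_ne_zero] at h01
        tauto
      · simp only [h1, zero_pow three_ne_zero, sub_zero, mul_eq_zero,
          pow_eq_zero_iff three_ne_zero] at h01
        tauto
    · simp only [h2, zero_pow three_ne_zero, sub_zero, mul_eq_zero,
        pow_eq_zero_iff three_ne_zero] at h02
      tauto
  rcases key with ⟨ha, hb⟩ | ⟨ha, hb⟩ | ⟨ha, hb⟩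
  · exact ⟨0, fun k hk => by fin_cases k <;> simp_all⟩
  · exact ⟨1, fun k hk => by fin_cases k <;> simp_all⟩
  · exact ⟨2, fun k hk => by fin_cases k <;> simp_all⟩

namespace Schoen

def cubic (v : Fin 6 → ℂ) : ℂ := v 0 ^ 3 + v 1 ^ 3 + v 2 ^ 3 - v 3 ^ 3 - v 4 ^ 3 - v 5 ^ 3

def product (v : Fin 6 → ℂ) : ℂ := v 0 * v 1 * v 2 - v 3 * v 4 * v 5

/-- Written as in `stmt_13`, so that the set counted there is `{P | IsSingular P.rep}` by
definition. -/
def jacobian (v : Fin 6 → ℂ) : Matrix (Fin 2) (Fin 6) ℂ :=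
  Matrix.of fun (i : Fin 2) (j : Fin 6) =>
    if i = 0 then
      (if (j : ℕ) < 3 then 3 * v j ^ 2 else -(3 * v j ^ 2))
    else
      (if (j : ℕ) < 3 then ∏ l ∈ ({0, 1, 2} : Finset (Fin 6)) \ {j}, v l
       else -(∏ l ∈ ({3, 4, 5} : Finset (Fin 6)) \ {j}, v l))

def IsSingular (v : Fin 6 → ℂ) : Prop :=
  cubic v = 0 ∧ product v = 0 ∧ (jacobian v).rank ≤ 1

theorem cubic_eq_sum (v : Fin 6 → ℂ) :
    cubic v = ∑ k : Fin 3, v (Fin.castAdd 3 k) ^ 3 - ∑ k : Fin 3, v (Fin.natAdd 3 k) ^ 3 := by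
  simp [cubic, Fin.sum_univ_three]
  ring

theorem jacobian_eq (v : Fin 6 → ℂ) : jacobian v =
    !![3 * v 0 ^ 2, 3 * v 1 ^ 2, 3 * v 2 ^ 2, -(3 * v 3 ^ 2), -(3 * v 4 ^ 2), -(3 * v 5 ^ 2);
      v 1 * v 2, v 0 * v 2, v 0 * v 1, -(v 4 * v 5), -(v 3 * v 5), -(v 3 * v 4)] := by
  ext i j
  fin_cases i <;> fin_cases j <;>
    simp [jacobian, Finset.sdiff_singleton_eq_erase, Finset.erase_insert_of_ne]

theorem jacobian_smul (c : ℂ) (v : Fin 6 → ℂ) : jacobian (c • v) = c ^ 2 • jacobian v := by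
  simp only [jacobian_eq]
  ext i j
  fin_cases i <;> fin_cases j <;> simp <;> ring

theorem isSingular_smul_iff {c : ℂ} (hc : c ≠ 0) {v : Fin 6 → ℂ} :
    IsSingular (c • v) ↔ IsSingular v := by
  have hcubic : cubic (c • v) = c ^ 3 * cubic v := by simp [cubic]; ring
  have hproduct : product (c • v) = c ^ 3 * product v := by simp [product]; ring
  have hrank : (jacobian (c • v)).rank = (jacobian v).rank := by
    rw [jacobian_smul, Matrix.rank_smul_of_mem_nonZeroDivisors]
    exact mem_nonZeroDivisors_of_ne_zero (pow_ne_zero 2 hc)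
  simp [IsSingular, hcubic, hproduct, hrank, hc]

theorem isSingular_rep_mk {v : Fin 6 → ℂ} (hv : v ≠ 0) :
    IsSingular (mk ℂ v hv).rep ↔ IsSingular v := by
  obtain ⟨a, ha⟩ := exists_smul_eq_mk_rep ℂ v hv
  rw [← ha, Units.smul_def, isSingular_smul_iff a.ne_zero]

theorem cube_relations_of_rank_le_one {v : Fin 6 → ℂ} (h : (jacobian v).rank ≤ 1) :
    v 2 * (v 0 ^ 3 - v 1 ^ 3) = 0 ∧ v 1 * (v 0 ^ 3 - v 2 ^ 3) = 0 ∧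
      v 5 * (v 3 ^ 3 - v 4 ^ 3) = 0 ∧ v 4 * (v 3 ^ 3 - v 5 ^ 3) = 0 := by
  have m01 := Matrix.mul_eq_mul_of_rank_le_one h 0 1
  have m02 := Matrix.mul_eq_mul_of_rank_le_one h 0 2
  have m34 := Matrix.mul_eq_mul_of_rank_le_one h 3 4
  have m35 := Matrix.mul_eq_mul_of_rank_le_one h 3 5
  simp only [jacobian_eq, Matrix.of_apply, Matrix.cons_val', Matrix.cons_val_zero,
    Matrix.cons_val_one, Matrix.cons_val, Matrix.cons_val_fin_one, mul_neg, neg_mul, neg_neg]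
    at m01 m02 m34 m35
  exact ⟨by linear_combination m01 / 3, by linear_combination m02 / 3,
    by linear_combination m34 / 3, by linear_combination m35 / 3⟩

/-- As `v k ^ 2 = (v k)⁻¹`, the second row is `v 0 * v 1 * v 2 / 3` times the first. -/
theorem rank_jacobian_le_one_of_cube_eq_one {v : Fin 6 → ℂ} (h : ∀ k, v k ^ 3 = 1)
    (hp : product v = 0) : (jacobian v).rank ≤ 1 := by
  refine Matrix.rank_le_one_of_row_one_eq_smul (c := v 0 * v 1 * v 2 / 3) ?_
  simp only [product] at hp
  ext j
  fin_cases j <;> simp only [Fin.isValue, Fin.zero_eta, Fin.mk_one, Fin.reduceFinMk, jacobian_eq,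
    Matrix.of_apply, Matrix.cons_val', Matrix.cons_val, Matrix.cons_val_zero, Matrix.cons_val_one,
    Matrix.cons_val_fin_one, Pi.smul_apply, smul_eq_mul]
  · linear_combination (-(v 1 * v 2)) * h 0
  · linear_combination (-(v 0 * v 2)) * h 1
  · linear_combination (-(v 0 * v 1)) * h 2
  · linear_combination v 4 * v 5 * h 3 + v 3 ^ 2 * hp
  · linear_combination v 3 * v 5 * h 4 + v 4 ^ 2 * hp
  · linear_combination v 3 * v 4 * h 5 + v 5 ^ 2 * hp

theorem cube_eq_of_isSingular {v : Fin 6 → ℂ} (h : IsSingular v) (hp : v 0 * v 1 * v 2 ≠ 0)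
    (k : Fin 6) : v k ^ 3 = v 0 ^ 3 := by
  obtain ⟨hcubic, hprod, hrank⟩ := h
  obtain ⟨h01, h02, h34, h35⟩ := cube_relations_of_rank_le_one hrank
  rw [product, sub_eq_zero] at hprod
  have hp' : v 3 * v 4 * v 5 ≠ 0 := hprod ▸ hp
  simp only [mul_ne_zero_iff] at hp hp'
  replace h01 := (mul_eq_zero.1 h01).resolve_left hp.2
  replace h02 := (mul_eq_zero.1 h02).resolve_left hp.1.2
  replace h34 := (mul_eq_zero.1 h34).resolve_left hp'.2
  replace h35 := (mul_eq_zero.1 h35).resolve_left hp'.1.2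
  have h3 : v 3 ^ 3 = v 0 ^ 3 := by
    rw [cubic] at hcubic
    linear_combination -(hcubic + h01 + h02 - h34 - h35) / 3
  have h1 : v 1 ^ 3 = v 0 ^ 3 := by linear_combination -h01
  have h2 : v 2 ^ 3 = v 0 ^ 3 := by linear_combination -h02
  have h4 : v 4 ^ 3 = v 0 ^ 3 := by linear_combination h3 - h34
  have h5 : v 5 ^ 3 = v 0 ^ 3 := by linear_combination h3 - h35
  fin_cases k
  exacts [rfl, h1, h2, h3, h4, h5]

def torusVec (a b c d : rootsOfUnity 3 ℂ) : Fin 6 → ℂ :=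
  ![1, (a : ℂˣ), (b : ℂˣ), (c : ℂˣ), (d : ℂˣ), ((a * b / (c * d) : rootsOfUnity 3 ℂ) : ℂˣ)]

theorem torusVec_apply_ne_zero (a b c d : rootsOfUnity 3 ℂ) (k : Fin 6) :
    torusVec a b c d k ≠ 0 := by
  fin_cases k <;> simp [torusVec]

theorem torusVec_ne_zero (a b c d : rootsOfUnity 3 ℂ) : torusVec a b c d ≠ 0 :=
  fun h => torusVec_apply_ne_zero a b c d 0 (congrFun h 0)

theorem isSingular_torusVec (a b c d : rootsOfUnity 3 ℂ) : IsSingular (torusVec a b c d) := by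
  have hcube : ∀ k, torusVec a b c d k ^ 3 = 1 := by
    intro k; fin_cases k <;> simp [torusVec, rootsOfUnity.coe_pow_eq_one, div_pow, mul_pow]
  have hp : product (torusVec a b c d) = 0 := by
    simp only [product, torusVec, Matrix.cons_val_zero, Matrix.cons_val_one, Matrix.cons_val,
      SubgroupClass.coe_div, Subgroup.coe_mul, Units.val_div_eq_div_val, Units.val_mul]
    field_simp
    ring
  refine ⟨?_, hp, rank_jacobian_le_one_of_cube_eq_one hcube hp⟩
  simp only [cubic, hcube]
  norm_num

theorem exists_mk_eq_torusVec {v : Fin 6 → ℂ} (hv : v ≠ 0) (h : IsSingular v)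
    (hp : v 0 * v 1 * v 2 ≠ 0) : ∃ a b c d : rootsOfUnity 3 ℂ,
      mk ℂ v hv = mk ℂ (torusVec a b c d) (torusVec_ne_zero a b c d) := by
  have hprod : v 0 * v 1 * v 2 = v 3 * v 4 * v 5 := sub_eq_zero.1 h.2.1
  have hp' : v 3 * v 4 * v 5 ≠ 0 := hprod ▸ hp
  have h0 : v 0 ≠ 0 := left_ne_zero_of_mul (left_ne_zero_of_mul hp)
  have h3 : v 3 ≠ 0 := left_ne_zero_of_mul (left_ne_zero_of_mul hp')
  have h4 : v 4 ≠ 0 := right_ne_zero_of_mul (left_ne_zero_of_mul hp')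
  let ζ (k : Fin 6) : rootsOfUnity 3 ℂ := rootsOfUnity.mkOfPowEq (v k / v 0) (by
    rw [div_pow, cube_eq_of_isSingular h hp k, div_self (pow_ne_zero 3 h0)])
  have hζ (k : Fin 6) : ((ζ k : ℂˣ) : ℂ) = v k / v 0 := rootsOfUnity.coe_mkOfPowEq _
  refine ⟨ζ 1, ζ 2, ζ 3, ζ 4, (mk_eq_mk_iff' ℂ _ _ hv _).2 ⟨v 0, ?_⟩⟩
  ext k
  fin_cases k <;> simp only [Fin.isValue, Fin.zero_eta, Fin.mk_one, Fin.reduceFinMk, torusVec, hζ,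
    Pi.smul_apply, smul_eq_mul, Matrix.cons_val, Matrix.cons_val_zero, Matrix.cons_val_one,
    SubgroupClass.coe_div, Subgroup.coe_mul, Units.val_div_eq_div_val, Units.val_mul, mul_one]
    <;> field_simp
  exact hprod

def lineVec (i j : Fin 3) (ζ : rootsOfUnity 3 ℂ) : Fin 6 → ℂ :=
  Pi.single (Fin.castAdd 3 i) 1 + Pi.single (Fin.natAdd 3 j) (ζ : ℂˣ)

theorem lineVec_castAdd (i j k : Fin 3) (ζ : rootsOfUnity 3 ℂ) :
    lineVec i j ζ (Fin.castAdd 3 k) = if k = i then 1 else 0 := by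
  simp only [lineVec, Pi.add_apply, Pi.single_apply, Fin.castAdd_inj,
    if_neg (Fin.castAdd_ne_natAdd k j), add_zero]

theorem lineVec_natAdd (i j k : Fin 3) (ζ : rootsOfUnity 3 ℂ) :
    lineVec i j ζ (Fin.natAdd 3 k) = if k = j then ((ζ : ℂˣ) : ℂ) else 0 := by
  simp only [lineVec, Pi.add_apply, Pi.single_apply, Fin.natAdd_inj,
    if_neg (Fin.castAdd_ne_natAdd i k).symm, zero_add]

theorem lineVec_ne_zero (i j : Fin 3) (ζ : rootsOfUnity 3 ℂ) : lineVec i j ζ ≠ 0 := fun h => by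
  simpa [lineVec_castAdd] using congrFun h (Fin.castAdd 3 i)

theorem isSingular_lineVec (i j : Fin 3) (ζ : rootsOfUnity 3 ℂ) : IsSingular (lineVec i j ζ) := by
  refine ⟨?_, ?_, Matrix.rank_le_one_of_row_one_eq_smul (c := 0) ?_⟩
  · have := rootsOfUnity.coe_pow_eq_one ζ
    fin_cases i <;> fin_cases j <;> simp [cubic, lineVec, this]
  · fin_cases i <;> fin_cases j <;> simp [product, lineVec]
  · ext k
    fin_cases i <;> fin_cases j <;> fin_cases k <;> simp [jacobian_eq, lineVec]

theorem exists_mk_eq_lineVec {v : Fin 6 → ℂ} (hv : v ≠ 0) (h : IsSingular v)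
    (hp : v 0 * v 1 * v 2 = 0) : ∃ (i j : Fin 3) (ζ : rootsOfUnity 3 ℂ),
      mk ℂ v hv = mk ℂ (lineVec i j ζ) (lineVec_ne_zero i j ζ) := by
  obtain ⟨hcubic, hprod, hrank⟩ := h
  obtain ⟨h01, h02, h34, h35⟩ := cube_relations_of_rank_le_one hrank
  have hp' : v 3 * v 4 * v 5 = 0 := by rw [product] at hprod; linear_combination hp - hprod
  obtain ⟨i, hi⟩ := exists_forall_ne_eq_zero_of_cube_relations
    (x := fun k => v (Fin.castAdd 3 k)) hp h01 h02
  obtain ⟨j, hj⟩ := exists_forall_ne_eq_zero_of_cube_relations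
    (x := fun k => v (Fin.natAdd 3 k)) hp' h34 h35
  have hcube : v (Fin.natAdd 3 j) ^ 3 = v (Fin.castAdd 3 i) ^ 3 := by
    rw [cubic_eq_sum,
      Finset.sum_eq_single i (fun k _ hk => by rw [hi k hk, zero_pow three_ne_zero]) (by simp),
      Finset.sum_eq_single j (fun k _ hk => by rw [hj k hk, zero_pow three_ne_zero]) (by simp)]
      at hcubic
    linear_combination -hcubic
  have hvi : v (Fin.castAdd 3 i) ≠ 0 := by
    intro h0
    rw [h0, zero_pow three_ne_zero] at hcube
    refine hv (funext ((Fin.forall_fin_add (m := 3) (n := 3) _).2 ⟨fun k => ?_, fun k => ?_⟩))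
    · by_cases hk : k = i
      · exact hk ▸ h0
      · exact hi k hk
    · by_cases hk : k = j
      · exact pow_eq_zero_iff three_ne_zero |>.1 (hk ▸ hcube)
      · exact hj k hk
  let ζ : rootsOfUnity 3 ℂ := rootsOfUnity.mkOfPowEq (v (Fin.natAdd 3 j) / v (Fin.castAdd 3 i))
    (by rw [div_pow, hcube, div_self (pow_ne_zero 3 hvi)])
  have hζ : ((ζ : ℂˣ) : ℂ) = v (Fin.natAdd 3 j) / v (Fin.castAdd 3 i) :=
    rootsOfUnity.coe_mkOfPowEq _
  refine ⟨i, j, ζ, (mk_eq_mk_iff' ℂ _ _ hv _).2 ⟨v (Fin.castAdd 3 i), ?_⟩⟩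
  refine funext ((Fin.forall_fin_add (m := 3) (n := 3) _).2 ⟨fun k => ?_, fun k => ?_⟩)
  · rw [Pi.smul_apply, smul_eq_mul, lineVec_castAdd]
    split_ifs with hk
    · rw [hk, mul_one]
    · rw [mul_zero, hi k hk]
  · rw [Pi.smul_apply, smul_eq_mul, lineVec_natAdd]
    split_ifs with hk
    · rw [hk, hζ, mul_div_cancel₀ _ hvi]
    · rw [mul_zero, hj k hk]

noncomputable def singularPoint :
    (rootsOfUnity 3 ℂ × rootsOfUnity 3 ℂ × rootsOfUnity 3 ℂ × rootsOfUnity 3 ℂ) ⊕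
      (Fin 3 × Fin 3 × rootsOfUnity 3 ℂ) → ℙ ℂ (Fin 6 → ℂ)
  | .inl (a, b, c, d) => mk ℂ (torusVec a b c d) (torusVec_ne_zero a b c d)
  | .inr (i, j, ζ) => mk ℂ (lineVec i j ζ) (lineVec_ne_zero i j ζ)

theorem isSingular_singularPoint_rep
    (t : (rootsOfUnity 3 ℂ × rootsOfUnity 3 ℂ × rootsOfUnity 3 ℂ × rootsOfUnity 3 ℂ) ⊕
      (Fin 3 × Fin 3 × rootsOfUnity 3 ℂ)) : IsSingular (singularPoint t).rep := by
  rcases t with ⟨a, b, c, d⟩ | ⟨i, j, ζ⟩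
  · exact (isSingular_rep_mk _).2 (isSingular_torusVec a b c d)
  · exact (isSingular_rep_mk _).2 (isSingular_lineVec i j ζ)

theorem setOf_isSingular_rep_eq_range :
    {P : ℙ ℂ (Fin 6 → ℂ) | IsSingular P.rep} = Set.range singularPoint := by
  refine Set.Subset.antisymm (fun P hP => ?_)
    (Set.range_subset_iff.2 isSingular_singularPoint_rep)
  induction P using Projectivization.ind with | h v hv => ?_
  replace hP := (isSingular_rep_mk hv).1 hP
  by_cases hp : v 0 * v 1 * v 2 = 0
  · obtain ⟨i, j, ζ, h⟩ := exists_mk_eq_lineVec hv hP hp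
    exact ⟨.inr (i, j, ζ), h.symm⟩
  · obtain ⟨a, b, c, d, h⟩ := exists_mk_eq_torusVec hv hP hp
    exact ⟨.inl (a, b, c, d), h.symm⟩

theorem singularPoint_injective : Function.Injective singularPoint := by
  rintro (⟨a, b, c, d⟩ | ⟨i, j, ζ⟩) (⟨a', b', c', d'⟩ | ⟨i', j', ζ'⟩) h
  · have coord := congrFun (eq_of_mk_eq_mk_of_apply_eq h (k := 0) rfl one_ne_zero)
    obtain rfl : a = a' := rootsOfUnity.coe_injective (coord 1)
    obtain rfl : b = b' := rootsOfUnity.coe_injective (coord 2)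
    obtain rfl : c = c' := rootsOfUnity.coe_injective (coord 3)
    obtain rfl : d = d' := rootsOfUnity.coe_injective (coord 4)
    rfl
  · refine absurd ((apply_eq_zero_iff_of_mk_eq_mk h (Fin.castAdd 3 (i' + 1))).2 ?_)
      (torusVec_apply_ne_zero a b c d _)
    rw [lineVec_castAdd, if_neg (add_ne_left.2 one_ne_zero)]
  · refine absurd ((apply_eq_zero_iff_of_mk_eq_mk h (Fin.castAdd 3 (i + 1))).1 ?_)
      (torusVec_apply_ne_zero a' b' c' d' _)
    rw [lineVec_castAdd, if_neg (add_ne_left.2 one_ne_zero)]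
  · obtain rfl : i = i' := by
      by_contra hne
      have := (apply_eq_zero_iff_of_mk_eq_mk h (Fin.castAdd 3 i)).2
        (by rw [lineVec_castAdd, if_neg hne])
      rw [lineVec_castAdd, if_pos rfl] at this
      exact one_ne_zero this
    obtain rfl : j = j' := by
      by_contra hne
      have := (apply_eq_zero_iff_of_mk_eq_mk h (Fin.natAdd 3 j)).2
        (by rw [lineVec_natAdd, if_neg hne])
      rw [lineVec_natAdd, if_pos rfl] at this
      exact ζ.val.ne_zero this
    have h' := congrFun (eq_of_mk_eq_mk_of_apply_eq h (k := Fin.castAdd 3 i)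
      (by rw [lineVec_castAdd, lineVec_castAdd]) (by simp [lineVec_castAdd])) (Fin.natAdd 3 j)
    rw [lineVec_natAdd, lineVec_natAdd, if_pos rfl, if_pos rfl] at h'
    rw [rootsOfUnity.coe_injective h']

end Schoen

/-- The Schoen threefold `x₁³+x₂³+x₃³ = x₄³+x₅³+x₆³`, `x₁x₂x₃ = x₄x₅x₆` in `ℙ⁵(ℂ)` has
exactly 108 singular points: the set of points where both polynomials vanish and the `2 × 6`
Jacobian matrix has rank `≤ 1` has cardinality `108`. -/
theorem stmt_13 :
    {P : Projectivization ℂ (Fin 6 → ℂ) |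
        (P.rep 0 ^ 3 + P.rep 1 ^ 3 + P.rep 2 ^ 3
          - P.rep 3 ^ 3 - P.rep 4 ^ 3 - P.rep 5 ^ 3 = 0) ∧
        (P.rep 0 * P.rep 1 * P.rep 2 - P.rep 3 * P.rep 4 * P.rep 5 = 0) ∧
        Matrix.rank (Matrix.of fun (i : Fin 2) (j : Fin 6) =>
          if i = 0 then
            (if (j : ℕ) < 3 then 3 * P.rep j ^ 2 else -(3 * P.rep j ^ 2))
          else
            (if (j : ℕ) < 3 then ∏ l ∈ ({0, 1, 2} : Finset (Fin 6)) \ {j}, P.rep l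
             else -(∏ l ∈ ({3, 4, 5} : Finset (Fin 6)) \ {j}, P.rep l))) ≤ 1}.ncard
      = 108 := by
  change {P : ℙ ℂ (Fin 6 → ℂ) | Schoen.IsSingular P.rep}.ncard = 108
  rw [Schoen.setOf_isSingular_rep_eq_range,
    Set.ncard_range_of_injective Schoen.singularPoint_injective]
  simp only [Nat.card_sum, Nat.card_prod, Complex.card_rootsOfUnity, Nat.card_eq_fintype_card,
    Fintype.card_fin]
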